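/- If G is a connected graph and n ≥ 1, then gp_d(G ∘ K_n) = n · gp_d(G). -/

import Mathlib

open SimpleGraph

/-- `u` and `v` are `X`-positionable in `G`: every shortest `u,v`-path meets `X`
only possibly in its endpoints. -/
def Positionable {V : Type*} (G : SimpleGraph V) (X : Set V) (u v : V) : Prop :=
  ∀ p : G.Walk u v, p.length = G.dist u v → ∀ w ∈ p.support, w ∈ X → w = u ∨ w = v

/-- `X` is a general position set of `G`. -/
def IsGPSet {V : Type*} (G : SimpleGraph V) (X : Set V) : Prop :=
  ∀ u ∈ X, ∀ v ∈ X, Positionable G X u v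

/-- `X` is an outer general position set of `G`. -/
def IsOuterGPSet {V : Type*} (G : SimpleGraph V) (X : Set V) : Prop :=
  IsGPSet G X ∧ ∀ u ∈ X, ∀ v ∉ X, Positionable G X u v

/-- `X` is a dual general position set of `G`. -/
def IsDualGPSet {V : Type*} (G : SimpleGraph V) (X : Set V) : Prop :=
  IsGPSet G X ∧ ∀ u ∉ X, ∀ v ∉ X, Positionable G X u v

/-- `X` is a total general position set of `G`. -/
def IsTotalGPSet {V : Type*} (G : SimpleGraph V) (X : Set V) : Prop :=
  ∀ u v : V, Positionable G X u v

/-- The outer general position number. -/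
noncomputable def gpo {V : Type*} (G : SimpleGraph V) : ℕ :=
  sSup {n | ∃ X : Set V, IsOuterGPSet G X ∧ X.ncard = n}

/-- The dual general position number. -/
noncomputable def gpd {V : Type*} (G : SimpleGraph V) : ℕ :=
  sSup {n | ∃ X : Set V, IsDualGPSet G X ∧ X.ncard = n}

/-- The total general position number. -/
noncomputable def gpt {V : Type*} (G : SimpleGraph V) : ℕ :=
  sSup {n | ∃ X : Set V, IsTotalGPSet G X ∧ X.ncard = n}

/-- The closed neighborhood `N[u]`. -/
def closedNbhd {V : Type*} (G : SimpleGraph V) (u : V) : Set V :=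
  insert u (G.neighborSet u)

/-- A vertex is simplicial if its closed neighborhood induces a complete subgraph. -/
def IsSimplicial {V : Type*} (G : SimpleGraph V) (u : V) : Prop :=
  ∀ x ∈ closedNbhd G u, ∀ y ∈ closedNbhd G u, x ≠ y → G.Adj x y

/-- `s(G)`, the number of simplicial vertices. -/
noncomputable def simplicialNum {V : Type*} (G : SimpleGraph V) : ℕ :=
  {u | IsSimplicial G u}.ncard

/-- `u` is maximally distant from `v`. -/
def MaxDistant {V : Type*} (G : SimpleGraph V) (u v : V) : Prop :=
  ∀ w, G.Adj u w → G.dist v w ≤ G.dist v u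

/-- `u` and `v` are mutually maximally distant. -/
def MMD {V : Type*} (G : SimpleGraph V) (u v : V) : Prop :=
  MaxDistant G u v ∧ MaxDistant G v u

/-- `b(G)`, the number of boundary vertices (vertices MMD with some vertex). -/
noncomputable def boundaryNum {V : Type*} (G : SimpleGraph V) : ℕ :=
  {u | ∃ v, MMD G u v}.ncard

/-- `u` and `v` are true twins: distinct with equal closed neighborhoods. -/
def TrueTwins {V : Type*} (G : SimpleGraph V) (u v : V) : Prop :=
  u ≠ v ∧ closedNbhd G u = closedNbhd G v

/-- The independence number of `G`. -/
noncomputable def indepNum {V : Type*} (G : SimpleGraph V) : ℕ :=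
  sSup {n | ∃ S : Set V, (∀ u ∈ S, ∀ v ∈ S, u ≠ v → ¬ G.Adj u v) ∧ S.ncard = n}

/-- The `k`-independence number `α_k(G)`. -/
noncomputable def kIndepNum {V : Type*} (G : SimpleGraph V) (k : ℕ) : ℕ :=
  sSup {n | ∃ S : Set V, (∀ u ∈ S, ∀ v ∈ S, u ≠ v → k < G.dist u v) ∧ S.ncard = n}

/-- `G` has diameter `k`. -/
def HasDiam {V : Type*} (G : SimpleGraph V) (k : ℕ) : Prop :=
  (∀ u v, G.dist u v ≤ k) ∧ ∃ u v, G.dist u v = k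

/-- The strong product `G ⊠ H`. -/
def StrongProd {α β : Type*} (G : SimpleGraph α) (H : SimpleGraph β) : SimpleGraph (α × β) where
  Adj x y := (x.1 = y.1 ∧ H.Adj x.2 y.2) ∨ (G.Adj x.1 y.1 ∧ x.2 = y.2) ∨
    (G.Adj x.1 y.1 ∧ H.Adj x.2 y.2)
  symm.symm x y h := by
    rcases h with ⟨h1, h2⟩ | ⟨h1, h2⟩ | ⟨h1, h2⟩
    · exact Or.inl ⟨h1.symm, h2.symm⟩
    · exact Or.inr (Or.inl ⟨h1.symm, h2.symm⟩)
    · exact Or.inr (Or.inr ⟨h1.symm, h2.symm⟩)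
  loopless.irrefl x h := by
    rcases h with ⟨_, h2⟩ | ⟨h1, _⟩ | ⟨h1, _⟩
    · exact H.loopless.irrefl _ h2
    · exact G.loopless.irrefl _ h1
    · exact G.loopless.irrefl _ h1

/-- The lexicographic product `G ∘ H`. -/
def LexProd {α β : Type*} (G : SimpleGraph α) (H : SimpleGraph β) : SimpleGraph (α × β) where
  Adj x y := G.Adj x.1 y.1 ∨ (x.1 = y.1 ∧ H.Adj x.2 y.2)
  symm.symm x y h := by
    rcases h with h1 | ⟨h1, h2⟩
    · exact Or.inl h1.symm
    · exact Or.inr ⟨h1.symm, h2.symm⟩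
  loopless.irrefl x h := by
    rcases h with h1 | ⟨_, h2⟩
    · exact G.loopless.irrefl _ h1
    · exact H.loopless.irrefl _ h2

/-!
For `g ≠ g'` the distance from `(g, i)` to `(g', i')` in `G ∘ K_n` is `d_G(g, g')`: a walk of `G`
lifts along any layer `a ↦ (a, f a)`, and a walk of `G ∘ K_n` projects to a walk of `G` that is no
longer. Hence geodesics between different fibres project to geodesics of `G` and meet the two end
fibres only in their endpoints, while two vertices of one fibre are adjacent. So `S × [n]` is a dual
general position set whenever `S` is, and the projection of a dual general position set `X` is
one; as `|X| ≤ n · |π(X)|`, the two inequalities follow.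
-/

namespace SimpleGraph

variable {V : Type*} {G : SimpleGraph V}

lemma Walk.dist_add_dist_le_of_mem_support {u v w : V} (p : G.Walk u v)
    (hp : p.length = G.dist u v) (hw : w ∈ p.support) :
    G.dist u w + G.dist w v ≤ G.dist u v := by
  classical
  calc G.dist u w + G.dist w v
      ≤ (p.takeUntil w hw).length + (p.dropUntil w hw).length :=
        Nat.add_le_add (dist_le _) (dist_le _)
    _ = G.dist u v := by rw [← Walk.length_append, p.take_spec hw, hp]

end SimpleGraph

section GeneralPosition

variable {V : Type*} {G : SimpleGraph V}

lemma positionable_of_dist_le_one (X : Set V) {u v : V} (h : G.dist u v ≤ 1) :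
    Positionable G X u v := by
  intro p hp w hw _
  cases p with
  | nil => simp_all
  | cons _ q =>
    cases q with
    | nil => simpa using hw
    | cons _ _ => simp only [SimpleGraph.Walk.length_cons] at hp; omega

lemma isDualGPSet_empty : IsDualGPSet G ∅ :=
  ⟨fun _ hu => absurd hu (Set.notMem_empty _),
    fun _ _ _ _ _ _ _ _ hw => absurd hw (Set.notMem_empty _)⟩

lemma bddAbove_ncard_isDualGPSet [Finite V] :
    BddAbove {n | ∃ X : Set V, IsDualGPSet G X ∧ X.ncard = n} :=
  ⟨Nat.card V, by rintro _ ⟨X, -, rfl⟩; exact Set.ncard_le_card X⟩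

lemma IsDualGPSet.ncard_le_gpd [Finite V] {X : Set V} (hX : IsDualGPSet G X) :
    X.ncard ≤ gpd G :=
  le_csSup bddAbove_ncard_isDualGPSet ⟨X, hX, rfl⟩

lemma exists_isDualGPSet_ncard_eq_gpd [Finite V] :
    ∃ X : Set V, IsDualGPSet G X ∧ X.ncard = gpd G :=
  Nat.sSup_mem (s := {n | ∃ X : Set V, IsDualGPSet G X ∧ X.ncard = n})
    ⟨0, ∅, isDualGPSet_empty, Set.ncard_empty V⟩ bddAbove_ncard_isDualGPSet

end GeneralPosition

namespace LexProd

variable {α β : Type*} {G : SimpleGraph α} {H : SimpleGraph β}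

def layer (H : SimpleGraph β) (f : α → β) : G →g LexProd G H :=
  ⟨fun a => (a, f a), Or.inl⟩

@[simp] lemma layer_apply (f : α → β) (a : α) : (layer (G := G) H f) a = (a, f a) := rfl

lemma exists_walk_lift (f : α → β) {g g' : α} (q : G.Walk g g') {i i' : β}
    (hi : f g = i) (hi' : f g' = i') :
    ∃ p : (LexProd G H).Walk (g, i) (g', i'),
      p.length = q.length ∧ ∀ a ∈ q.support, (a, f a) ∈ p.support := by
  subst hi hi'
  refine ⟨(q.map (layer H f)).copy (layer_apply f g) (layer_apply f g'),
    by rw [SimpleGraph.Walk.length_copy, SimpleGraph.Walk.length_map], fun a ha => ?_⟩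
  simp only [SimpleGraph.Walk.support_copy, SimpleGraph.Walk.support_map]
  exact List.mem_map_of_mem ha

lemma exists_walk_fst {x y : α × β} (p : (LexProd G H).Walk x y) :
    ∃ q : G.Walk x.1 y.1, q.length ≤ p.length ∧ ∀ w ∈ p.support, w.1 ∈ q.support := by
  induction p with
  | nil => exact ⟨.nil, le_rfl, by simp⟩
  | @cons x y z h p ih =>
    obtain ⟨q, hq_len, hq_supp⟩ := ih
    rcases id h with hadj | ⟨hfst, -⟩
    · refine ⟨.cons hadj q, by simpa using hq_len, ?_⟩
      simp only [SimpleGraph.Walk.support_cons, List.mem_cons, forall_eq_or_imp]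
      exact ⟨by simp, fun w hw => Or.inr (hq_supp w hw)⟩
    · refine ⟨q.copy hfst.symm rfl, ?_, ?_⟩
      · simp only [SimpleGraph.Walk.length_copy, SimpleGraph.Walk.length_cons]; omega
      · simp only [SimpleGraph.Walk.support_cons, List.mem_cons, forall_eq_or_imp,
          SimpleGraph.Walk.support_copy]
        exact ⟨by rw [hfst]; exact q.start_mem_support, hq_supp⟩

lemma reachable_fst {x y : α × β} (h : (LexProd G H).Reachable x y) : G.Reachable x.1 y.1 :=
  h.elim fun p => (exists_walk_fst p).elim fun q _ => q.reachable

lemma dist_of_fst_ne {g g' : α} (hg : g ≠ g') (i i' : β) :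
    (LexProd G H).dist (g, i) (g', i') = G.dist g g' := by
  classical
  by_cases hr : G.Reachable g g'
  · obtain ⟨q, hq⟩ := hr.exists_walk_length_eq_dist
    obtain ⟨p, hp, -⟩ := exists_walk_lift (H := H) (i := i) (i' := i')
      (Function.update (fun _ => i) g' i') q
      (by simp [hg]) (by simp)
    obtain ⟨p', hp'⟩ := p.reachable.exists_walk_length_eq_dist
    obtain ⟨q', hq', -⟩ := exists_walk_fst p'
    exact le_antisymm (hq ▸ hp ▸ SimpleGraph.dist_le p) (hp' ▸ (SimpleGraph.dist_le q').trans hq')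
  · rw [SimpleGraph.dist_eq_zero_of_not_reachable hr,
      SimpleGraph.dist_eq_zero_of_not_reachable (mt reachable_fst hr)]

lemma eq_of_mem_support_of_fst_eq {g g' : α} {i i' : β} (hg : g ≠ g')
    {p : (LexProd G H).Walk (g, i) (g', i')} (hp : p.length = (LexProd G H).dist (g, i) (g', i'))
    {w : α × β} (hw : w ∈ p.support) (hwg : w.1 = g) : w = (g, i) := by
  classical
  obtain ⟨a, j⟩ := w
  obtain rfl : g = a := hwg.symm
  -- `(g, j)` is as far from `(g', i')` as `(g, i)` is, so it lies at distance `0` from `(g, i)`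
  have htri := p.dist_add_dist_le_of_mem_support hp hw
  rw [dist_of_fst_ne hg, dist_of_fst_ne hg] at htri
  have hreach : (LexProd G H).Reachable (g, i) (g, j) := (p.takeUntil _ hw).reachable
  exact (hreach.dist_eq_zero_iff.1 (by omega)).symm

lemma eq_or_eq_of_mem_support_of_fst {g g' : α} {i i' : β} (hg : g ≠ g')
    {p : (LexProd G H).Walk (g, i) (g', i')} (hp : p.length = (LexProd G H).dist (g, i) (g', i'))
    {w : α × β} (hw : w ∈ p.support) (hw_fst : w.1 = g ∨ w.1 = g') :
    w = (g, i) ∨ w = (g', i') := by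
  refine hw_fst.imp (eq_of_mem_support_of_fst_eq hg hp hw) fun hwg' => ?_
  refine eq_of_mem_support_of_fst_eq hg.symm (p := p.reverse) ?_ (by simpa using hw) hwg'
  rw [SimpleGraph.Walk.length_reverse, hp, SimpleGraph.dist_comm]

end LexProd

section

open LexProd

variable {α β : Type*} {G : SimpleGraph α} {H : SimpleGraph β}

lemma Positionable.lexProd_prod_univ {S : Set α} {g g' : α} (hS : Positionable G S g g')
    (i i' : β) : Positionable (LexProd G (⊤ : SimpleGraph β)) (S ×ˢ Set.univ) (g, i) (g', i') := by
  rcases eq_or_ne g g' with rfl | hg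
  · refine positionable_of_dist_le_one _ ?_
    rcases eq_or_ne i i' with rfl | hi
    · simp
    · exact (SimpleGraph.dist_eq_one_iff_adj.2 (Or.inr ⟨rfl, hi⟩)).le
  intro p hp w hw hwX
  obtain ⟨q, hq_len, hq_supp⟩ := exists_walk_fst p
  have hq : q.length = G.dist g g' :=
    le_antisymm (hq_len.trans (hp.trans (dist_of_fst_ne hg i i')).le) (SimpleGraph.dist_le q)
  exact eq_or_eq_of_mem_support_of_fst hg hp hw (hS q hq w.1 (hq_supp w hw) hwX.1)

lemma Positionable.image_fst {X : Set (α × β)} {g g' : α} {i i' : β}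
    (hX : Positionable (LexProd G H) X (g, i) (g', i')) : Positionable G (Prod.fst '' X) g g' := by
  classical
  rcases eq_or_ne g g' with rfl | hg
  · exact positionable_of_dist_le_one _ (by simp)
  rintro q hq _ ha ⟨⟨a, j⟩, hjX, rfl⟩
  by_cases hag : a = g
  · exact Or.inl hag
  by_cases hag' : a = g'
  · exact Or.inr hag'
  let f := Function.update (Function.update (fun _ => j) g i) g' i'
  obtain ⟨p, hp, hp_supp⟩ := exists_walk_lift (H := H) (i := i) (i' := i') f q
    (by simp [f, hg]) (by simp [f])
  have hfa : f a = j := by simp [f, hag, hag']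
  exact (hX p (by rw [hp, hq, dist_of_fst_ne hg]) _ (hp_supp a ha) (by rwa [hfa])).imp
    (congrArg Prod.fst) (congrArg Prod.fst)

lemma IsDualGPSet.lexProd_prod_univ {S : Set α} (hS : IsDualGPSet G S) :
    IsDualGPSet (LexProd G (⊤ : SimpleGraph β)) (S ×ˢ Set.univ) :=
  ⟨fun _ hu _ hv => (hS.1 _ hu.1 _ hv.1).lexProd_prod_univ _ _,
    fun _ hu _ hv =>
      (hS.2 _ (fun h => hu ⟨h, trivial⟩) _ (fun h => hv ⟨h, trivial⟩)).lexProd_prod_univ _ _⟩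

lemma IsDualGPSet.image_fst [Nonempty β] {X : Set (α × β)} (hX : IsDualGPSet (LexProd G H) X) :
    IsDualGPSet G (Prod.fst '' X) := by
  refine ⟨?_, fun g hg g' hg' => ?_⟩
  · rintro _ ⟨⟨g, i⟩, hi, rfl⟩ _ ⟨⟨g', i'⟩, hi', rfl⟩
    exact (hX.1 _ hi _ hi').image_fst
  · obtain ⟨i⟩ := ‹Nonempty β›
    exact (hX.2 (g, i) (fun h => hg ⟨_, h, rfl⟩) (g', i) (fun h => hg' ⟨_, h, rfl⟩)).image_fst

end

theorem gpd_lexProd_complete_general {α : Type*} [Fintype α] (G : SimpleGraph α)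
    (n : ℕ) (hn : 1 ≤ n) :
    gpd (LexProd G (⊤ : SimpleGraph (Fin n))) = n * gpd G := by
  have : Nonempty (Fin n) := ⟨⟨0, hn⟩⟩
  have ncard_prod_univ (S : Set α) : (S ×ˢ (Set.univ : Set (Fin n))).ncard = S.ncard * n := by
    rw [Set.ncard_prod, Set.ncard_univ, Nat.card_fin]
  apply le_antisymm
  · obtain ⟨X, hX, hX_card⟩ :=
      exists_isDualGPSet_ncard_eq_gpd (G := LexProd G (⊤ : SimpleGraph (Fin n)))
    calc gpd _ = X.ncard := hX_card.symm
      _ ≤ ((Prod.fst '' X) ×ˢ (Set.univ : Set (Fin n))).ncard :=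
        Set.ncard_le_ncard fun x hx => ⟨⟨x, hx, rfl⟩, trivial⟩
      _ = (Prod.fst '' X).ncard * n := ncard_prod_univ _
      _ ≤ gpd G * n := Nat.mul_le_mul_right n hX.image_fst.ncard_le_gpd
      _ = n * gpd G := Nat.mul_comm _ _
  · obtain ⟨S, hS, hS_card⟩ := exists_isDualGPSet_ncard_eq_gpd (G := G)
    calc n * gpd G = (S ×ˢ (Set.univ : Set (Fin n))).ncard := by
          rw [ncard_prod_univ, hS_card, Nat.mul_comm]
      _ ≤ _ := hS.lexProd_prod_univ.ncard_le_gpd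

/-- gp_d(G ∘ K_n) = n·gp_d(G). -/
theorem gpd_lexProd_complete {α : Type*} [Fintype α] (G : SimpleGraph α)
    (hG : G.Connected) (n : ℕ) (hn : 1 ≤ n) :
    gpd (LexProd G (⊤ : SimpleGraph (Fin n))) = n * gpd G :=
  gpd_lexProd_complete_general G n hn
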